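/- Let p be an integer and q a positive integer with gcd(p,q)=1. For any integer n, define c_{n,p,q} = (1/q) · Σ_{k=0}^{q-1} (-1)^{kp} · exp(iπ(p/q)k²) · exp(-2iπ nk/q). Then |c_{n,p,q}| = 1/√q. -/

import Mathlib

/-!
Write the summand as `chirp q p n k = exp (π i φ(k) / q)` with `φ(k) = p k (k + q) - 2 n k`; the
factor `k + q` absorbs the sign `(-1)^(kp)`. Since `φ(k + q) ≡ φ(k) mod 2q` and
`φ(x + d) = φ(x) + φ(d) + 2pxd`, the chirp descends to `f : ZMod q → ℂ` with
`f (x + d) = f x * f d * ψ (p x d)` for the standard additive character `ψ`. Expanding `|∑ f|²` and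
substituting `x = y + d` leaves `∑_d f d * ∑_y ψ (p d y)`; as `p` is a unit mod `q`, the inner sum
is `q` for `d = 0` and vanishes otherwise, so `|∑ f|² = q`.
-/

open Real Complex ComplexConjugate Finset

theorem AddChar.IsPrimitive.mulShift_of_isUnit {R R' : Type*} [CommRing R] [CommMonoid R']
    {ψ : AddChar R R'} (hψ : ψ.IsPrimitive) {u : R} (hu : IsUnit u) :
    (ψ.mulShift u).IsPrimitive := fun a ha => by
  rw [AddChar.mulShift_mulShift]
  exact hψ (hu.mul_right_eq_zero.not.mpr ha)

theorem norm_sum_sq_eq_card_of_map_add {R : Type*} [CommRing R] [Fintype R]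
    {ψ : AddChar R ℂ} (hψ : ψ.IsPrimitive) {f : R → ℂ} (hf : ∀ x, ‖f x‖ = 1)
    (hadd : ∀ x d, f (x + d) = f x * f d * ψ (x * d)) :
    ‖∑ x, f x‖ ^ 2 = Fintype.card R := by
  classical
  have hunit : ∀ x, f x * conj (f x) = 1 := fun x => by simp [mul_conj', hf]
  have h0 : f 0 = 1 := by
    have h := hadd 0 0
    rw [add_zero, mul_zero, AddChar.map_zero_eq_one, mul_one] at h
    exact (mul_eq_left₀ (norm_ne_zero_iff.mp (by simp [hf]))).mp h.symm
  have hdiag : ∀ y d, f (y + d) * conj (f y) = f d * ψ (y * d) := fun y d => by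
    rw [hadd, mul_right_comm, mul_right_comm (f y), hunit, one_mul]
  apply ofReal_injective
  calc ((‖∑ x, f x‖ ^ 2 : ℝ) : ℂ)
      = ∑ y, ∑ x, f x * conj (f y) := by
        rw [ofReal_pow, ← mul_conj', map_sum, sum_mul_sum, sum_comm]
    _ = ∑ y, ∑ d, f d * ψ (y * d) := by
        refine sum_congr rfl fun y _ => ?_
        rw [← Equiv.sum_comp (Equiv.addLeft y)]
        exact sum_congr rfl fun d _ => hdiag y d
    _ = ∑ d, f d * ((if d = 0 then Fintype.card R else 0 : ℕ) : ℂ) := by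
        rw [sum_comm]
        simp_rw [← mul_sum, AddChar.sum_mulShift _ hψ]
    _ = Fintype.card R := by
        simp [h0]

theorem ZMod.sum_comp_val {M : Type*} [AddCommMonoid M] (q : ℕ) [NeZero q] (g : ℕ → M) :
    ∑ x : ZMod q, g x.val = ∑ k ∈ range q, g k := by
  obtain ⟨m, rfl⟩ := Nat.exists_eq_add_one_of_ne_zero (NeZero.ne q)
  -- `ZMod (m + 1)` unfolds to `Fin (m + 1)`, with `ZMod.val` the coercion to `ℕ`.
  exact Fin.sum_univ_eq_sum_range g (m + 1)

noncomputable def chirp (q : ℕ) (p n : ℤ) (k : ℕ) : ℂ :=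
  exp (π * I * (p * k * (k + q) - 2 * n * k) / q)

section
variable {q : ℕ} (p n : ℤ)

theorem norm_chirp (k : ℕ) : ‖chirp q p n k‖ = 1 := by
  rw [chirp, show (π * I * (p * k * (k + q) - 2 * n * k) / q : ℂ)
      = ((π * (p * k * (k + q) - 2 * n * k) / q : ℝ) : ℂ) * I by push_cast; ring]
  exact norm_exp_ofReal_mul_I _

theorem chirp_add [NeZero q] (a b : ℕ) :
    chirp q p n (a + b)
      = chirp q p n a * chirp q p n b * ZMod.stdAddChar ((p * a * b : ℤ) : ZMod q) := by
  have hq : (q : ℂ) ≠ 0 := NeZero.ne _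
  rw [ZMod.stdAddChar_coe, chirp, chirp, chirp, ← Complex.exp_add, ← Complex.exp_add]
  congr 1
  field_simp
  push_cast
  ring

theorem chirp_periodic [NeZero q] : Function.Periodic (chirp q p n) q := fun k => by
  have hq : (q : ℂ) ≠ 0 := NeZero.ne _
  have hphase : (π * I * (p * ↑(k + q) * (↑(k + q) + q) - 2 * n * ↑(k + q)) / q : ℂ)
      = π * I * (p * k * (k + q) - 2 * n * k) / q + ((p * k + p * q - n : ℤ) : ℂ) * (2 * π * I) := by
    field_simp
    push_cast
    ring
  rw [chirp, chirp, hphase, Complex.exp_add, exp_int_mul_two_pi_mul_I, mul_one]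

theorem chirp_val_add [NeZero q] (x d : ZMod q) :
    chirp q p n (x + d).val
      = chirp q p n x.val * chirp q p n d.val * ZMod.stdAddChar.mulShift (p : ZMod q) (x * d) := by
  rw [ZMod.val_add, (chirp_periodic p n).map_mod_nat, chirp_add,
    AddChar.mulShift_apply]
  push_cast
  simp only [ZMod.natCast_zmod_val, mul_assoc]

theorem neg_one_zpow_mul_exp_mul_exp_eq_chirp [NeZero q] (k : ℕ) :
    (-1 : ℂ) ^ ((k : ℤ) * p) * Complex.exp (I * π * p * (k : ℂ) ^ 2 / q) *
      Complex.exp (-2 * π * I * n * k / q) = chirp q p n k := by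
  have hq : (q : ℂ) ≠ 0 := NeZero.ne _
  rw [← exp_pi_mul_I, ← exp_int_mul, ← Complex.exp_add, ← Complex.exp_add, chirp]
  congr 1
  field_simp
  push_cast
  ring

end

theorem abs_gauss_coeff (p : ℤ) (q : ℕ) (hq : 1 ≤ q) (hcop : Int.gcd p (q : ℤ) = 1) (n : ℤ) :
    ‖(1 / (q : ℂ)) * ∑ k ∈ Finset.range q,
      (-1 : ℂ) ^ ((k : ℤ) * p) * Complex.exp (Complex.I * (π : ℂ) * (p : ℂ) * (k : ℂ) ^ 2 / (q : ℂ)) *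
        Complex.exp (-2 * (π : ℂ) * Complex.I * (n : ℂ) * (k : ℂ) / (q : ℂ))‖
      = 1 / Real.sqrt q := by
  have : NeZero q := ⟨Nat.one_le_iff_ne_zero.mp hq⟩
  have hp : IsUnit (p : ZMod q) :=
    (ZMod.unitOfIsCoprime p (Int.isCoprime_iff_gcd_eq_one.mpr hcop)).isUnit
  have hsum : ‖∑ k ∈ range q, chirp q p n k‖ ^ 2 = q := by
    rw [← ZMod.sum_comp_val, norm_sum_sq_eq_card_of_map_add
      ((ZMod.isPrimitive_stdAddChar q).mulShift_of_isUnit hp) (fun x => norm_chirp p n x.val)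
      (chirp_val_add p n), ZMod.card]
  simp_rw [neg_one_zpow_mul_exp_mul_exp_eq_chirp p n]
  rw [norm_mul, ← Real.sqrt_sq (norm_nonneg (∑ k ∈ range q, _)), hsum, norm_div, norm_one,
    Complex.norm_natCast, div_mul_eq_mul_div, one_mul, Real.sqrt_div_self']
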